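/- (Classical Prokhorov's Theorem for cdfs.) A set 𝓓 of cdfs is weakly relatively sequentially compact (i.e., every sequence in 𝓓 has a subsequence (F_{k_n})_n and a cdf F such that F_{k_n}(x) → F(x) at every continuity point x of F) if and only if 𝓓 is tight. -/
import Mathlib


open Filter Topology

/-- A cumulative distribution function: nondecreasing, right-continuous,
tending to 0 at -∞ and to 1 at +∞. -/
def IsCDF (F : ℝ → ℝ) : Prop :=
  Monotone F ∧ (∀ x : ℝ, ContinuousWithinAt F (Set.Ici x) x) ∧
    Tendsto F atBot (nhds 0) ∧ Tendsto F atTop (nhds 1)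

/-- φ_{F,α}(G) = sup_x max{F(x-α) - G(x), G(x) - F(x+α)}. -/
noncomputable def phi (F : ℝ → ℝ) (α : ℝ) (G : ℝ → ℝ) : ℝ :=
  ⨆ x : ℝ, max (F (x - α) - G x) (G x - F (x + α))

/-- ψ_{F,N}(G) = sup_{x ∈ N} |F(x) - G(x)| for a finite set N. -/
noncomputable def psi (F : ℝ → ℝ) (N : Finset ℝ) (G : ℝ → ℝ) : ℝ :=
  sSup ((fun x => |F x - G x|) '' N)

/-- The Lévy metric with parameter γ. -/
noncomputable def levy (γ : ℝ) (F G : ℝ → ℝ) : ℝ :=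
  sInf {α : ℝ | 0 < α ∧ ∀ x : ℝ, F (x - γ * α) - α ≤ G x ∧ G x ≤ F (x + γ * α) + α}

/-- The escape index χ_e(𝓓) = inf_{M>0} sup_{F ∈ 𝓓} max{F(-M), 1 - F(M)}. -/
noncomputable def chiE (D : Set (ℝ → ℝ)) : ℝ :=
  sInf ((fun M => sSup ((fun F => max (F (-M)) (1 - F M)) '' D)) '' (Set.Ioi (0 : ℝ)))

lemma IsCDF.nonneg {F : ℝ → ℝ} (hF : IsCDF F) (x : ℝ) : 0 ≤ F x :=
  le_of_tendsto hF.2.2.1 (eventually_atBot.2 ⟨x, fun y hy => hF.1 hy⟩)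

lemma IsCDF.le_one {F : ℝ → ℝ} (hF : IsCDF F) (x : ℝ) : F x ≤ 1 :=
  ge_of_tendsto hF.2.2.2 (eventually_atTop.2 ⟨x, fun y hy => hF.1 hy⟩)

lemma helly (F : ℕ → ℝ → ℝ) (hcdf : ∀ n, IsCDF (F n)) :
    ∃ k : ℕ → ℕ, StrictMono k ∧ ∃ H : ℚ → ℝ, Monotone H ∧ (∀ q, 0 ≤ H q ∧ H q ≤ 1) ∧
      ∀ q : ℚ, Tendsto (fun n => F (k n) (q : ℝ)) atTop (nhds (H q)) := by
  set f : ℕ → ℚ → Set.Icc (0:ℝ) 1 := fun n q =>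
    ⟨F n q, (hcdf n).nonneg _, (hcdf n).le_one _⟩ with hf
  obtain ⟨L, -, k, hk, hconv⟩ := isCompact_univ.tendsto_subseq (x := f)
    (fun n => Set.mem_univ _)
  rw [tendsto_pi_nhds] at hconv
  have hconv' : ∀ q : ℚ, Tendsto (fun n => F (k n) (q : ℝ)) atTop (nhds (L q)) := by
    intro q
    exact ((continuous_subtype_val.tendsto _).comp (hconv q))
  refine ⟨k, hk, fun q => L q, ?_, fun q => ⟨(L q).2.1, (L q).2.2⟩, hconv'⟩
  intro q r hqr
  exact le_of_tendsto_of_tendsto' (hconv' q) (hconv' r)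
    (fun n => (hcdf (k n)).1 (by exact_mod_cast hqr))

section GDef
variable (H : ℚ → ℝ)

noncomputable def Gdef (x : ℝ) : ℝ := sInf (H '' {q : ℚ | x < (q : ℝ)})

variable {H}
variable (hmono : Monotone H) (h01 : ∀ q, 0 ≤ H q ∧ H q ≤ 1)
include h01

lemma Gdef_ne (x : ℝ) : (H '' {q : ℚ | x < (q : ℝ)}).Nonempty := by
  obtain ⟨q, hq⟩ := exists_rat_gt x
  exact ⟨H q, ⟨q, hq, rfl⟩⟩

lemma Gdef_bdd (x : ℝ) : BddBelow (H '' {q : ℚ | x < (q : ℝ)}) :=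
  ⟨0, fun y ⟨q, _, hq⟩ => hq ▸ (h01 q).1⟩

lemma Gdef_le {x : ℝ} {q : ℚ} (hq : x < (q : ℝ)) : Gdef H x ≤ H q :=
  csInf_le (Gdef_bdd h01 x) ⟨q, hq, rfl⟩

lemma le_Gdef {x : ℝ} {c : ℝ} (h : ∀ q : ℚ, x < (q : ℝ) → c ≤ H q) : c ≤ Gdef H x :=
  le_csInf (Gdef_ne h01 x) (fun y ⟨q, hq, hy⟩ => hy ▸ h q hq)

lemma Gdef_nonneg (x : ℝ) : 0 ≤ Gdef H x := le_Gdef h01 (fun q _ => (h01 q).1)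

lemma Gdef_mono : Monotone (Gdef H) := by
  intro x y hxy
  exact le_Gdef h01 (fun q hq => Gdef_le h01 (lt_of_le_of_lt hxy hq))

lemma Gdef_rc (x : ℝ) : ContinuousWithinAt (Gdef H) (Set.Ici x) x := by
  rw [Metric.continuousWithinAt_iff]
  intro ε hε
  have h1 : Gdef H x < Gdef H x + ε := by linarith
  obtain ⟨y, ⟨q, hq, rfl⟩, hlt⟩ := exists_lt_of_csInf_lt (Gdef_ne h01 x) h1
  have hq' : x < (q : ℝ) := hq
  refine ⟨(q : ℝ) - x, by linarith, fun z hz hdz => ?_⟩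
  have hz1 : z < (q : ℝ) := by
    rw [Real.dist_eq, abs_lt] at hdz
    linarith
  have h2 : Gdef H z ≤ H q := Gdef_le h01 hz1
  have h3 : Gdef H x ≤ Gdef H z := Gdef_mono h01 hz
  rw [Real.dist_eq, abs_lt]
  constructor <;> linarith
end GDef

-- tails of Gdef under tightness-style bounds on H
lemma Gdef_atBot {H : ℚ → ℝ} (hmono : Monotone H) (h01 : ∀ q, 0 ≤ H q ∧ H q ≤ 1)
    (ht : ∀ ε > (0:ℝ), ∃ M > (0:ℝ), (∀ q : ℚ, (q:ℝ) ≤ -M → H q ≤ ε) ∧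
      (∀ q : ℚ, M ≤ (q:ℝ) → 1 - ε ≤ H q)) :
    Tendsto (Gdef H) atBot (nhds 0) := by
  rw [tendsto_order]
  constructor
  · intro b hb
    exact Eventually.of_forall (fun x => lt_of_lt_of_le hb (Gdef_nonneg h01 x))
  · intro b hb
    obtain ⟨M, hM, hlow, -⟩ := ht (b / 2) (by linarith)
    rw [eventually_atBot]
    refine ⟨-(M + 1), fun x hx => ?_⟩
    obtain ⟨q, hq1, hq2⟩ := exists_rat_btwn (show x < -M by linarith)
    calc Gdef H x ≤ H q := Gdef_le h01 hq1
      _ ≤ b / 2 := hlow q (le_of_lt hq2)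
      _ < b := by linarith

lemma Gdef_atTop {H : ℚ → ℝ} (hmono : Monotone H) (h01 : ∀ q, 0 ≤ H q ∧ H q ≤ 1)
    (ht : ∀ ε > (0:ℝ), ∃ M > (0:ℝ), (∀ q : ℚ, (q:ℝ) ≤ -M → H q ≤ ε) ∧
      (∀ q : ℚ, M ≤ (q:ℝ) → 1 - ε ≤ H q)) :
    Tendsto (Gdef H) atTop (nhds 1) := by
  rw [tendsto_order]
  constructor
  · intro b hb
    obtain ⟨M, hM, -, hhigh⟩ := ht ((1 - b) / 2) (by linarith)
    rw [eventually_atTop]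
    refine ⟨M, fun x hx => ?_⟩
    have : 1 - (1 - b) / 2 ≤ Gdef H x := by
      refine le_Gdef h01 (fun q hq => hhigh q ?_)
      exact le_of_lt (lt_of_le_of_lt hx hq)
    linarith
  · intro b hb
    refine Eventually.of_forall (fun x => lt_of_le_of_lt ?_ hb)
    obtain ⟨q, hq⟩ := exists_rat_gt x
    exact le_trans (Gdef_le h01 hq) (h01 q).2

-- convergence at continuity points
lemma Gdef_conv {H : ℚ → ℝ} (hmono : Monotone H) (h01 : ∀ q, 0 ≤ H q ∧ H q ≤ 1)
    {u : ℕ → ℝ → ℝ} (humono : ∀ n, Monotone (u n))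
    (hconv : ∀ q : ℚ, Tendsto (fun n => u n (q : ℝ)) atTop (nhds (H q)))
    {x : ℝ} (hx : ContinuousAt (Gdef H) x) :
    Tendsto (fun n => u n x) atTop (nhds (Gdef H x)) := by
  rw [tendsto_order]
  constructor
  · intro b hb
    have h1 : ∀ᶠ z in nhds x, b < Gdef H z := hx.eventually (eventually_gt_nhds hb)
    rw [Metric.eventually_nhds_iff] at h1
    obtain ⟨δ, hδ, hball⟩ := h1
    obtain ⟨r, hr1, hr2⟩ := exists_rat_btwn (show x - δ / 2 < x by linarith)
    have hy : b < Gdef H (x - δ / 2) := by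
      apply hball
      rw [Real.dist_eq, abs_lt]; constructor <;> linarith
    have hHr : b < H r := lt_of_lt_of_le hy (Gdef_le h01 hr1)
    have : ∀ᶠ n in atTop, b < u n (r : ℝ) := (hconv r).eventually (eventually_gt_nhds hHr)
    exact this.mono (fun n hn => lt_of_lt_of_le hn (humono n (le_of_lt hr2)))
  · intro b hb
    obtain ⟨y, ⟨q, hq, rfl⟩, hlt⟩ := exists_lt_of_csInf_lt (Gdef_ne h01 x) hb
    have hq' : x < (q : ℝ) := hq
    have : ∀ᶠ n in atTop, u n (q : ℝ) < b := (hconv q).eventually (eventually_lt_nhds hlt)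
    exact this.mono (fun n hn => lt_of_le_of_lt (humono n (le_of_lt hq')) hn)

theorem classical_prokhorov (D : Set (ℝ → ℝ)) (hDcdf : ∀ F ∈ D, IsCDF F) :
    (∀ F : ℕ → ℝ → ℝ, (∀ n, F n ∈ D) →
        ∃ k : ℕ → ℕ, StrictMono k ∧ ∃ G : ℝ → ℝ, IsCDF G ∧
          ∀ x : ℝ, ContinuousAt G x →
            Tendsto (fun n => F (k n) x) atTop (nhds (G x))) ↔
      (∀ ε > (0 : ℝ), ∃ M > (0 : ℝ), ∀ F ∈ D, max (F (-M)) (1 - F M) ≤ ε) := by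
  constructor
  · -- compact → tight
    intro hC ε hε
    by_contra hcon
    push_neg at hcon
    have h' : ∀ n : ℕ, ∃ F ∈ D, ε < max (F (-((n:ℝ) + 1))) (1 - F ((n:ℝ) + 1)) := by
      intro n
      obtain ⟨F, hFD, hFε⟩ := hcon ((n:ℝ) + 1) (by positivity)
      exact ⟨F, hFD, hFε⟩
    choose Fs hmem hgt using h'
    obtain ⟨k, hk, G, hG, hconv⟩ := hC Fs hmem
    -- continuity points of G are dense
    have hdense : Dense {x : ℝ | ¬ ContinuousAt G x}ᶜ :=
      Set.Countable.dense_compl ℝ (hG.1.countable_not_continuousAt)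
    obtain ⟨a0, ha0⟩ := eventually_atBot.1 (hG.2.2.1.eventually (eventually_lt_nhds hε))
    have h1b : (1:ℝ) - ε < 1 := by linarith
    obtain ⟨b0, hb0⟩ := eventually_atTop.1 (hG.2.2.2.eventually (eventually_gt_nhds h1b))
    obtain ⟨a, haC, ha⟩ := hdense.exists_mem_open isOpen_Iio ⟨a0 - 1, show a0 - 1 < a0 by linarith⟩
    obtain ⟨b, hbC, hb⟩ := hdense.exists_mem_open isOpen_Ioi ⟨b0 + 1, show b0 < b0 + 1 by linarith⟩
    have hGa : G a < ε := ha0 a (le_of_lt ha)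
    have hGb : 1 - ε < G b := hb0 b (le_of_lt hb)
    have hca : ∀ᶠ n in atTop, Fs (k n) a < ε :=
      (hconv a (by simpa using haC)).eventually (eventually_lt_nhds hGa)
    have hcb : ∀ᶠ n in atTop, 1 - ε < Fs (k n) b :=
      (hconv b (by simpa using hbC)).eventually (eventually_gt_nhds hGb)
    obtain ⟨N1, ha'⟩ := eventually_atTop.1 hca
    obtain ⟨N2, hb'⟩ := eventually_atTop.1 hcb
    obtain ⟨N3, hN3⟩ := exists_nat_ge (-a - 1)
    obtain ⟨N4, hN4⟩ := exists_nat_ge (b - 1)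
    set n := max (max N1 N2) (max N3 N4) with hn
    have hkn : (max N3 N4 : ℕ) ≤ k n := le_trans (le_max_right _ _) hk.le_apply
    have hkn3 : (N3 : ℝ) ≤ (k n : ℝ) := by
      exact_mod_cast le_trans (le_max_left N3 N4) hkn
    have hkn4 : (N4 : ℝ) ≤ (k n : ℝ) := by
      exact_mod_cast le_trans (le_max_right N3 N4) hkn
    have hcdfn := hDcdf _ (hmem (k n))
    have hle1 : Fs (k n) (-((k n : ℝ) + 1)) ≤ Fs (k n) a := hcdfn.1 (by linarith)
    have hle2 : Fs (k n) b ≤ Fs (k n) ((k n : ℝ) + 1) := hcdfn.1 (by linarith)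
    have e1 : Fs (k n) a < ε := ha' n (le_trans (le_max_left N1 N2) (le_max_left _ _))
    have e2 : 1 - ε < Fs (k n) b := hb' n (le_trans (le_max_right N1 N2) (le_max_left _ _))
    have := hgt (k n)
    rcases lt_max_iff.1 this with h | h <;> linarith
  · -- tight → compact
    intro hT F hF
    have hcdf : ∀ n, IsCDF (F n) := fun n => hDcdf _ (hF n)
    obtain ⟨k, hk, H, hHmono, hH01, hHconv⟩ := helly F hcdf
    have ht : ∀ ε > (0:ℝ), ∃ M > (0:ℝ), (∀ q : ℚ, (q:ℝ) ≤ -M → H q ≤ ε) ∧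
        (∀ q : ℚ, M ≤ (q:ℝ) → 1 - ε ≤ H q) := by
      intro ε hε
      obtain ⟨M, hM, hMb⟩ := hT ε hε
      refine ⟨M, hM, fun q hq => ?_, fun q hq => ?_⟩
      · refine le_of_tendsto (hHconv q) (Eventually.of_forall fun n => ?_)
        have h1 : F (k n) q ≤ F (k n) (-M) := (hcdf (k n)).1 hq
        have h2 := hMb _ (hF (k n))
        rw [max_le_iff] at h2
        linarith [h2.1]
      · refine ge_of_tendsto (hHconv q) (Eventually.of_forall fun n => ?_)
        have h1 : F (k n) M ≤ F (k n) q := (hcdf (k n)).1 hq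
        have h2 := hMb _ (hF (k n))
        rw [max_le_iff] at h2
        linarith [h2.2]
    refine ⟨k, hk, Gdef H, ⟨Gdef_mono hH01, Gdef_rc hH01,
      Gdef_atBot hHmono hH01 ht, Gdef_atTop hHmono hH01 ht⟩, fun x hx => ?_⟩
    exact Gdef_conv hHmono hH01 (fun n => (hcdf (k n)).1) hHconv hx
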